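/- With I_P and I_Q as above, ρ* ∈ P(X) is an L¹-local minimizer of I_P if and only if ρ* = ρ_{b*} for a local minimizer b* ∈ Q of I_Q. In particular every L¹-local minimizer of I_P is of maximal-entropy form and is essentially bounded away from 0 and ∞. -/

import Mathlib

open MeasureTheory Filter

def probDens {X : Type*} [MeasurableSpace X] (μ : Measure X) : Set (X → ℝ) :=
  {ρ | Integrable ρ μ ∧ 0 ≤ᵐ[μ] ρ ∧ ∫ t, ρ t ∂μ = 1}

/-- The vector of moments of `a` under the density `ρ`. -/
noncomputable def mom {X : Type*} [MeasurableSpace X] (μ : Measure X) {k : ℕ}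
    (a : X → EuclideanSpace ℝ (Fin k)) (ρ : X → ℝ) : EuclideanSpace ℝ (Fin k) :=
  (EuclideanSpace.equiv (Fin k) ℝ).symm fun i => ∫ t, a t i * ρ t ∂μ

/-- The set `Q` of admissible moments. -/
def momentSet {X : Type*} [MeasurableSpace X] (μ : Measure X) {k : ℕ}
    (a : X → EuclideanSpace ℝ (Fin k)) : Set (EuclideanSpace ℝ (Fin k)) :=
  mom μ a '' probDens μ

/-!
Mixing is the key step. If `ρ*` is an `L¹`-local minimiser of `I_P` with moment `b*`, then
`ρ_λ = (1 - λ) ρ* + λ ρ_{b*}` has the same moment `b*` and lies within `λ ‖ρ_{b*} - ρ*‖_{L¹}`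
of `ρ*`, so for small `λ > 0` local minimality and convexity of `ρ ↦ ∫ φ(ρ)` give
`∫ φ(ρ*) ≤ ∫ φ(ρ_λ) ≤ (1 - λ) ∫ φ(ρ*) + λ ψ(b*)`, i.e. `∫ φ(ρ*) ≤ ψ(b*)`; uniqueness of the
entropy minimiser then forces `ρ* = ρ_{b*}`, which also yields the bounds. Once minimisers of
`I_P` are of the form `ρ_b`, local minimality passes between `I_P` and `I_Q = I_P ∘ ρ_·`: from
`I_Q` to `I_P` because `ρ ↦ b_ρ` is `L¹`-Lipschitz and `I_P ρ ≥ I_Q b_ρ`, from `I_P` to `I_Q`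
because `b ↦ ρ_b` is continuous into `L¹`.
-/

open Set Topology

section

theorem ConvexOn.exists_affine_le_of_Ici {φ : ℝ → ℝ} (hφ : ConvexOn ℝ (Ici 0) φ) :
    ∃ α β : ℝ, ∀ x, 0 ≤ x → α + β * x ≤ φ x := by
  set K := |φ 1 - φ 0| + |φ 2 - φ 1|
  refine ⟨φ 1 - K, -K, fun x hx => ?_⟩
  have hK₀ := abs_nonneg (φ 1 - φ 0)
  have hK₂ := abs_nonneg (φ 2 - φ 1)
  rcases lt_trichotomy x 1 with hx1 | rfl | hx1
  · have h := hφ.slope_mono_adjacent hx (by norm_num : (2 : ℝ) ∈ Ici 0) hx1 one_lt_two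
    rw [div_le_iff₀ (sub_pos.2 hx1)] at h
    nlinarith [le_abs_self (φ 2 - φ 1)]
  · linarith
  · have h := hφ.slope_mono_adjacent self_mem_Ici hx zero_lt_one hx1
    rw [le_div_iff₀ (sub_pos.2 hx1)] at h
    nlinarith [neg_abs_le (φ 1 - φ 0)]

variable {X : Type*} [MeasurableSpace X] {μ : Measure X}

/- `φ` need not be continuous at `0` nor measurable on `(-∞, 0)`, so we pass through a
measurable function agreeing with `φ` on `[0, ∞)`. -/
theorem ConvexOn.aestronglyMeasurable_comp {φ : ℝ → ℝ} (hφ : ConvexOn ℝ (Ici 0) φ)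
    {ρ : X → ℝ} (hρ : AEStronglyMeasurable ρ μ) (h₀ : 0 ≤ᵐ[μ] ρ) :
    AEStronglyMeasurable (fun t => φ (ρ t)) μ := by
  classical
  have hφc : ContinuousOn φ (Ioi 0) := by simpa using hφ.continuousOn_interior
  have hg : Measurable ((Ioi 0).piecewise φ fun _ => φ 0) :=
    hφc.measurable_piecewise continuousOn_const measurableSet_Ioi
  refine (hg.comp_aemeasurable hρ.aemeasurable).aestronglyMeasurable.congr ?_
  filter_upwards [h₀] with t ht
  rcases (show (0 : ℝ) ≤ ρ t from ht).lt_or_eq with hpos | hzero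
  · simp [piecewise_eq_of_mem _ _ _ (mem_Ioi.2 hpos)]
  · simp [← hzero]

theorem convex_probDens : Convex ℝ (probDens μ) := by
  intro ρ hρ σ hσ c d hc hd hcd
  refine ⟨(hρ.1.smul c).add (hσ.1.smul d), ?_, ?_⟩
  · filter_upwards [hρ.2.1, hσ.2.1] with t hρt hσt
    simp only [Pi.add_apply, Pi.smul_apply, smul_eq_mul, Pi.zero_apply] at hρt hσt ⊢
    positivity
  · simp only [Pi.add_apply, Pi.smul_apply, smul_eq_mul]
    rw [integral_add (hρ.1.const_mul c) (hσ.1.const_mul d), integral_const_mul,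
      integral_const_mul, hρ.2.2, hσ.2.2, mul_one, mul_one, hcd]

def finiteEntropyDens (μ : Measure X) (φ : ℝ → ℝ) : Set (X → ℝ) :=
  {ρ | ρ ∈ probDens μ ∧ Integrable (fun t => φ (ρ t)) μ}

theorem convexOn_integral_comp [IsFiniteMeasure μ] {φ : ℝ → ℝ} (hφ : ConvexOn ℝ (Ici 0) φ) :
    ConvexOn ℝ (finiteEntropyDens μ φ) fun ρ => ∫ t, φ (ρ t) ∂μ := by
  have mix : ∀ ⦃ρ⦄, ρ ∈ finiteEntropyDens μ φ → ∀ ⦃σ⦄, σ ∈ finiteEntropyDens μ φ →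
      ∀ ⦃c d : ℝ⦄, 0 ≤ c → 0 ≤ d → c + d = 1 → c • ρ + d • σ ∈ finiteEntropyDens μ φ ∧
        ∫ t, φ ((c • ρ + d • σ) t) ∂μ ≤ c • ∫ t, φ (ρ t) ∂μ + d • ∫ t, φ (σ t) ∂μ := by
    intro ρ hρ σ hσ c d hc hd hcd
    have hτ := convex_probDens hρ.1 hσ.1 hc hd hcd
    have hub : ∀ᵐ t ∂μ, φ ((c • ρ + d • σ) t) ≤ c * φ (ρ t) + d * φ (σ t) := by
      filter_upwards [hρ.1.2.1, hσ.1.2.1] with t hρt hσt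
      exact hφ.2 hρt hσt hc hd hcd
    have hint_ub := (hρ.2.const_mul c).add (hσ.2.const_mul d)
    obtain ⟨α, β, hαβ⟩ := hφ.exists_affine_le_of_Ici
    have hint : Integrable (fun t => φ ((c • ρ + d • σ) t)) μ :=
      integrable_of_le_of_le (hφ.aestronglyMeasurable_comp hτ.1.1 hτ.2.1)
        (hτ.2.1.mono fun t ht => hαβ _ ht) hub ((integrable_const α).add (hτ.1.const_mul β))
        hint_ub
    refine ⟨⟨hτ, hint⟩, ?_⟩
    calc ∫ t, φ ((c • ρ + d • σ) t) ∂μ ≤ ∫ t, c * φ (ρ t) + d * φ (σ t) ∂μ :=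
          integral_mono_ae hint hint_ub hub
      _ = c • ∫ t, φ (ρ t) ∂μ + d • ∫ t, φ (σ t) ∂μ := by
          rw [integral_add (hρ.2.const_mul c) (hσ.2.const_mul d), integral_const_mul,
            integral_const_mul, smul_eq_mul, smul_eq_mul]
  exact ⟨fun ρ hρ σ hσ c d hc hd hcd => (mix hρ hσ hc hd hcd).1,
    fun ρ hρ σ hσ c d hc hd hcd => (mix hρ hσ hc hd hcd).2⟩

variable {k : ℕ} {a : X → EuclideanSpace ℝ (Fin k)}

theorem mom_apply (ρ : X → ℝ) (i : Fin k) : mom μ a ρ i = ∫ t, a t i * ρ t ∂μ := rfl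

theorem integrable_coord_mul (ha : MemLp a ⊤ μ) {ρ : X → ℝ} (hρ : Integrable ρ μ) (i : Fin k) :
    Integrable (fun t => a t i * ρ t) μ :=
  hρ.mul_of_top_right ((EuclideanSpace.proj (𝕜 := ℝ) i).comp_memLp' ha)

theorem mom_smul_add_smul (ha : MemLp a ⊤ μ) {ρ σ : X → ℝ} (hρ : Integrable ρ μ)
    (hσ : Integrable σ μ) (c d : ℝ) :
    mom μ a (c • ρ + d • σ) = c • mom μ a ρ + d • mom μ a σ := by
  ext i
  simp only [mom_apply, PiLp.add_apply, PiLp.smul_apply, Pi.add_apply, Pi.smul_apply,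
    smul_eq_mul, mul_add, mul_left_comm _ c, mul_left_comm _ d]
  rw [integral_add ((integrable_coord_mul ha hρ i).const_mul c)
    ((integrable_coord_mul ha hσ i).const_mul d), integral_const_mul, integral_const_mul]

theorem mom_congr_ae {ρ σ : X → ℝ} (h : ρ =ᵐ[μ] σ) : mom μ a ρ = mom μ a σ := by
  ext i
  simp only [mom_apply]
  exact integral_congr_ae (h.mono fun t ht => by simp only [ht])

def IsL1LocalMinOn (μ : Measure X) (F : (X → ℝ) → ℝ) (S : Set (X → ℝ)) (ρ : X → ℝ) : Prop :=
  ∃ ε : ℝ, 0 < ε ∧ ∀ σ ∈ S, ∫ t, |σ t - ρ t| ∂μ < ε → F ρ ≤ F σ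

theorem integral_comp_le_of_isL1LocalMinOn [IsFiniteMeasure μ] (ha : MemLp a ⊤ μ) {φ : ℝ → ℝ}
    (hφ : ConvexOn ℝ (Ici 0) φ) {ρ σ : X → ℝ} (hρ : ρ ∈ finiteEntropyDens μ φ)
    (hσ : σ ∈ finiteEntropyDens μ φ) (hmom : mom μ a σ = mom μ a ρ)
    (hloc : IsL1LocalMinOn μ (fun τ => ∫ t, φ (τ t) ∂μ)
      {τ ∈ finiteEntropyDens μ φ | mom μ a τ = mom μ a ρ} ρ) :
    ∫ t, φ (ρ t) ∂μ ≤ ∫ t, φ (σ t) ∂μ := by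
  obtain ⟨ε, hε, hloc⟩ := hloc
  set D := ∫ t, |σ t - ρ t| ∂μ
  have hsmall : Tendsto (fun l : ℝ => l * D) (𝓝[>] 0) (𝓝 0) :=
    ((continuous_mul_const D).tendsto' 0 0 (zero_mul D)).mono_left nhdsWithin_le_nhds
  have hunit : ∀ᶠ l in 𝓝[>] (0 : ℝ), l ∈ Ioc 0 1 := Ioc_mem_nhdsGT one_pos
  obtain ⟨l, ⟨hl₀, hl₁⟩, hlD⟩ := (hunit.and (hsmall.eventually (gt_mem_nhds hε))).exists
  have hconv := convexOn_integral_comp (μ := μ) hφ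
  have hτ := hconv.1 hρ hσ (sub_nonneg.2 hl₁) hl₀.le (sub_add_cancel 1 l)
  have hτmom : mom μ a ((1 - l) • ρ + l • σ) = mom μ a ρ := by
    rw [mom_smul_add_smul ha hρ.1.1 hσ.1.1, hmom, ← add_smul, sub_add_cancel, one_smul]
  have hτdist : ∫ t, |((1 - l) • ρ + l • σ) t - ρ t| ∂μ = l * D := by
    rw [← integral_const_mul]
    congr 1 with t
    simp only [Pi.add_apply, Pi.smul_apply, smul_eq_mul]
    rw [show (1 - l) * ρ t + l * σ t - ρ t = l * (σ t - ρ t) by ring, abs_mul, abs_of_pos hl₀]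
  have hnear := hloc _ ⟨hτ, hτmom⟩ (hτdist ▸ hlD)
  exact hnear.trans (hconv.le_right_of_left_le' hρ hσ (sub_nonneg.2 hl₁) hl₀ (sub_add_cancel 1 l)
    hnear)

def admissibleDens (μ : Measure X) (a : X → EuclideanSpace ℝ (Fin k)) (φ : ℝ → ℝ)
    (A : Set (EuclideanSpace ℝ (Fin k))) : Set (X → ℝ) :=
  {ρ | ρ ∈ probDens μ ∧ Integrable (fun t => φ (ρ t)) μ ∧ mom μ a ρ ∈ A}

noncomputable def freeEnergy (μ : Measure X) (a : X → EuclideanSpace ℝ (Fin k)) (φ : ℝ → ℝ)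
    (f : EuclideanSpace ℝ (Fin k) → ℝ) (ρ : X → ℝ) : ℝ :=
  (∫ t, φ (ρ t) ∂μ) + f (mom μ a ρ)

structure IsMaxEntropyFamily (μ : Measure X) (a : X → EuclideanSpace ℝ (Fin k)) (φ : ℝ → ℝ)
    (ψ : EuclideanSpace ℝ (Fin k) → ℝ) (ρmin : EuclideanSpace ℝ (Fin k) → X → ℝ) : Prop where
  mem : ∀ b ∈ momentSet μ a, ρmin b ∈ finiteEntropyDens μ φ
  mom_eq : ∀ b ∈ momentSet μ a, mom μ a (ρmin b) = b
  value_eq : ∀ b ∈ momentSet μ a, ψ b = ∫ t, φ (ρmin b t) ∂μ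
  le_integral : ∀ b ∈ momentSet μ a, ∀ ρ ∈ finiteEntropyDens μ φ, mom μ a ρ = b →
    ψ b ≤ ∫ t, φ (ρ t) ∂μ
  ae_eq_of_integral_eq : ∀ b ∈ momentSet μ a, ∀ ρ ∈ finiteEntropyDens μ φ, mom μ a ρ = b →
    ψ b = ∫ t, φ (ρ t) ∂μ → ρ =ᵐ[μ] ρmin b

namespace IsMaxEntropyFamily

variable {φ : ℝ → ℝ} {ψ : EuclideanSpace ℝ (Fin k) → ℝ} {ρmin : EuclideanSpace ℝ (Fin k) → X → ℝ}
  {A : Set (EuclideanSpace ℝ (Fin k))} {f : EuclideanSpace ℝ (Fin k) → ℝ}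
  {b : EuclideanSpace ℝ (Fin k)} {ρ : X → ℝ}

theorem freeEnergy_eq (h : IsMaxEntropyFamily μ a φ ψ ρmin) (hb : b ∈ momentSet μ a)
    (hρ : ρ =ᵐ[μ] ρmin b) : freeEnergy μ a φ f ρ = ψ b + f b := by
  rw [freeEnergy, mom_congr_ae hρ, h.mom_eq b hb, h.value_eq b hb,
    integral_congr_ae (hρ.mono fun t ht => congrArg φ ht)]

theorem ae_eq_of_isL1LocalMinOn [IsFiniteMeasure μ] (h : IsMaxEntropyFamily μ a φ ψ ρmin)
    (ha : MemLp a ⊤ μ) (hφ : ConvexOn ℝ (Ici 0) φ) (hA : A ⊆ momentSet μ a)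
    (hρ : ρ ∈ admissibleDens μ a φ A)
    (hloc : IsL1LocalMinOn μ (freeEnergy μ a φ f) (admissibleDens μ a φ A) ρ) :
    ρ =ᵐ[μ] ρmin (mom μ a ρ) := by
  obtain ⟨hρP, hρφ, hρA⟩ := hρ
  have hb := hA hρA
  obtain ⟨ε, hε, hloc⟩ := hloc
  have hclass : IsL1LocalMinOn μ (fun τ => ∫ t, φ (τ t) ∂μ)
      {τ ∈ finiteEntropyDens μ φ | mom μ a τ = mom μ a ρ} ρ := by
    refine ⟨ε, hε, fun τ ⟨hτ, hτmom⟩ hτd => ?_⟩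
    have hfree := hloc τ ⟨hτ.1, hτ.2, hτmom ▸ hρA⟩ hτd
    rwa [freeEnergy, freeEnergy, hτmom, add_le_add_iff_right] at hfree
  have hle := integral_comp_le_of_isL1LocalMinOn ha hφ ⟨hρP, hρφ⟩ (h.mem _ hb) (h.mom_eq _ hb)
    hclass
  exact h.ae_eq_of_integral_eq _ hb ρ ⟨hρP, hρφ⟩ rfl
    (le_antisymm (h.le_integral _ hb ρ ⟨hρP, hρφ⟩ rfl) (hle.trans_eq (h.value_eq _ hb).symm))

theorem isLocalMin_of_ae_eq (h : IsMaxEntropyFamily μ a φ ψ ρmin)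
    (hcont : ∀ b ∈ momentSet μ a, ∀ δ : ℝ, 0 < δ → ∃ η : ℝ, 0 < η ∧
      ∀ b' ∈ momentSet μ a, ‖b' - b‖ < η → ∫ t, |ρmin b' t - ρmin b t| ∂μ < δ)
    (hA : A ⊆ momentSet μ a) (hb : b ∈ A) (hρ : ρ =ᵐ[μ] ρmin b)
    (hloc : IsL1LocalMinOn μ (freeEnergy μ a φ f) (admissibleDens μ a φ A) ρ) :
    ∃ ε : ℝ, 0 < ε ∧ ∀ b' ∈ A, ‖b' - b‖ < ε → ψ b + f b ≤ ψ b' + f b' := by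
  obtain ⟨ε, hε, hloc⟩ := hloc
  obtain ⟨η, hη, hclose⟩ := hcont b (hA hb) ε hε
  refine ⟨η, hη, fun b' hb' hnear => ?_⟩
  have hb'Q := hA hb'
  have hdist : ∫ t, |ρmin b' t - ρ t| ∂μ < ε := by
    convert hclose b' hb'Q hnear using 1
    exact integral_congr_ae (hρ.mono fun t ht => by simp only [ht])
  have hmem : ρmin b' ∈ admissibleDens μ a φ A :=
    ⟨(h.mem b' hb'Q).1, (h.mem b' hb'Q).2, (h.mom_eq b' hb'Q).symm ▸ hb'⟩
  calc ψ b + f b = freeEnergy μ a φ f ρ := (h.freeEnergy_eq (hA hb) hρ).symm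
    _ ≤ freeEnergy μ a φ f (ρmin b') := hloc _ hmem hdist
    _ = ψ b' + f b' := h.freeEnergy_eq hb'Q (ae_eq_refl _)

theorem isL1LocalMinOn_of_ae_eq (h : IsMaxEntropyFamily μ a φ ψ ρmin) {Ca : ℝ} (hCa : 0 ≤ Ca)
    (hL1 : ∀ ρ σ : X → ℝ, Integrable ρ μ → Integrable σ μ →
      ‖mom μ a ρ - mom μ a σ‖ ≤ Ca * ∫ t, |ρ t - σ t| ∂μ)
    (hA : A ⊆ momentSet μ a) (hb : b ∈ A) (hρ : ρ =ᵐ[μ] ρmin b)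
    (hloc : ∃ ε : ℝ, 0 < ε ∧ ∀ b' ∈ A, ‖b' - b‖ < ε → ψ b + f b ≤ ψ b' + f b') :
    IsL1LocalMinOn μ (freeEnergy μ a φ f) (admissibleDens μ a φ A) ρ := by
  obtain ⟨ε, hε, hloc⟩ := hloc
  have hbQ := hA hb
  have hρint : Integrable ρ μ := (h.mem b hbQ).1.1.congr hρ.symm
  refine ⟨ε / (Ca + 1), by positivity, fun σ ⟨hσP, hσφ, hσA⟩ hσd => ?_⟩
  have hnear : ‖mom μ a σ - b‖ < ε := calc
    ‖mom μ a σ - b‖ = ‖mom μ a σ - mom μ a ρ‖ := by rw [mom_congr_ae hρ, h.mom_eq b hbQ]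
    _ ≤ Ca * ∫ t, |σ t - ρ t| ∂μ := hL1 σ ρ hσP.1 hρint
    _ ≤ Ca * (ε / (Ca + 1)) := by gcongr
    _ < ε := by rw [mul_div_assoc', div_lt_iff₀ (by positivity)]; linarith
  calc freeEnergy μ a φ f ρ = ψ b + f b := h.freeEnergy_eq hbQ hρ
    _ ≤ ψ (mom μ a σ) + f (mom μ a σ) := hloc _ hσA hnear
    _ ≤ freeEnergy μ a φ f σ := add_le_add_left (h.le_integral _ (hA hσA) σ ⟨hσP, hσφ⟩ rfl) _

end IsMaxEntropyFamily

end

theorem local_minimisers_equiv_general {X : Type*} [MeasurableSpace X]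
    (μ : Measure X) [IsFiniteMeasure μ] {k : ℕ}
    (a : X → EuclideanSpace ℝ (Fin k)) (ha : MemLp a ⊤ μ)
    (φ : ℝ → ℝ)
    (hconv0 : ConvexOn ℝ (Set.Ici 0) φ)
    (ψ : EuclideanSpace ℝ (Fin k) → ℝ) (ρmin : EuclideanSpace ℝ (Fin k) → X → ℝ)
    (hρP : ∀ b ∈ momentSet μ a, ρmin b ∈ probDens μ)
    (hρgen : ∀ b ∈ momentSet μ a, mom μ a (ρmin b) = b)
    (hρint : ∀ b ∈ momentSet μ a, Integrable (fun t => φ (ρmin b t)) μ)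
    (hψ : ∀ b ∈ momentSet μ a, ψ b = ∫ t, φ (ρmin b t) ∂μ)
    (hmin : ∀ b ∈ momentSet μ a, ∀ ρ ∈ probDens μ, mom μ a ρ = b →
      Integrable (fun t => φ (ρ t)) μ → ψ b ≤ ∫ t, φ (ρ t) ∂μ)
    (huniq : ∀ b ∈ momentSet μ a, ∀ ρ ∈ probDens μ, mom μ a ρ = b →
      Integrable (fun t => φ (ρ t)) μ → ψ b = ∫ t, φ (ρ t) ∂μ → ρ =ᵐ[μ] ρmin b)
    -- the optimal densities are bounded away from 0 and ∞
    (hbdd : ∀ b ∈ momentSet μ a, ∃ c C : ℝ, 0 < c ∧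
      ∀ᵐ t ∂μ, c ≤ ρmin b t ∧ ρmin b t ≤ C)
    -- |b_ρ − b_σ| ≤ ‖a‖_∞ ‖ρ−σ‖_{L¹}
    (Ca : ℝ) (hCa : 0 ≤ Ca)
    (hL1 : ∀ ρ σ : X → ℝ, Integrable ρ μ → Integrable σ μ →
      ‖mom μ a ρ - mom μ a σ‖ ≤ Ca * ∫ t, |ρ t - σ t| ∂μ)
    -- continuity of b ↦ ρ_b into L¹
    (hcont : ∀ b ∈ momentSet μ a, ∀ δ : ℝ, 0 < δ → ∃ η : ℝ, 0 < η ∧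
      ∀ b' ∈ momentSet μ a, ‖b' - b‖ < η → ∫ t, |ρmin b' t - ρmin b t| ∂μ < δ)
    -- the constraint set A and the function f
    (A : Set (EuclideanSpace ℝ (Fin k)))
    (hAQ : A ⊆ momentSet μ a)
    (f : EuclideanSpace ℝ (Fin k) → ℝ) :
    let SP : Set (X → ℝ) := {ρ | ρ ∈ probDens μ ∧
      Integrable (fun t => φ (ρ t)) μ ∧ mom μ a ρ ∈ A}
    let IP : (X → ℝ) → ℝ := fun ρ => (∫ t, φ (ρ t) ∂μ) + f (mom μ a ρ)
    let IQ : EuclideanSpace ℝ (Fin k) → ℝ := fun b => ψ b + f b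
    ∀ ρstar ∈ SP,
      ((∃ ε : ℝ, 0 < ε ∧ ∀ σ ∈ SP,
          (∫ t, |σ t - ρstar t| ∂μ) < ε → IP ρstar ≤ IP σ) ↔
        (∃ bstar ∈ A, (∃ ε : ℝ, 0 < ε ∧ ∀ b ∈ A, ‖b - bstar‖ < ε → IQ bstar ≤ IQ b) ∧
          ρstar =ᵐ[μ] ρmin bstar)) ∧
      ((∃ ε : ℝ, 0 < ε ∧ ∀ σ ∈ SP,
          (∫ t, |σ t - ρstar t| ∂μ) < ε → IP ρstar ≤ IP σ) →
        ∃ c C : ℝ, 0 < c ∧ ∀ᵐ t ∂μ, c ≤ ρstar t ∧ ρstar t ≤ C) := by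
  intro SP IP IQ ρstar hρstar
  have hfam : IsMaxEntropyFamily μ a φ ψ ρmin :=
    ⟨fun b hb => ⟨hρP b hb, hρint b hb⟩, hρgen, hψ,
      fun b hb ρ hρ hmom => hmin b hb ρ hρ.1 hmom hρ.2,
      fun b hb ρ hρ hmom => huniq b hb ρ hρ.1 hmom hρ.2⟩
  have forward : IsL1LocalMinOn μ IP SP ρstar → ρstar =ᵐ[μ] ρmin (mom μ a ρstar) :=
    hfam.ae_eq_of_isL1LocalMinOn ha hconv0 hAQ hρstar
  refine ⟨⟨fun hloc => ⟨mom μ a ρstar, hρstar.2.2,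
      hfam.isLocalMin_of_ae_eq hcont hAQ hρstar.2.2 (forward hloc) hloc, forward hloc⟩, ?_⟩,
    fun hloc => ?_⟩
  · rintro ⟨b, hb, hlocQ, hae⟩
    exact hfam.isL1LocalMinOn_of_ae_eq hCa hL1 hAQ hb hae hlocQ
  · obtain ⟨c, C, hc, hbounds⟩ := hbdd _ (hAQ hρstar.2.2)
    refine ⟨c, C, hc, ?_⟩
    filter_upwards [forward hloc, hbounds] with t hρt hbt
    rwa [hρt]

/-- One-to-one correspondence between `L¹`-local minimisers of the microscopic free
energy `I_P` and local minimisers of the macroscopic free energy `I_Q`: `ρ*` is an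
`L¹`-local minimiser of `I_P` iff `ρ* = ρ_{b*}` (a.e.) for a local minimiser `b*`
of `I_Q`; in particular every `L¹`-local minimiser of `I_P` is of maximal-entropy form
and essentially bounded away from `0` and `∞`. -/
theorem local_minimisers_equiv {X : Type*} [MeasurableSpace X]
    (μ : Measure X) [IsFiniteMeasure μ] {k : ℕ}
    (a : X → EuclideanSpace ℝ (Fin k)) (ha : MemLp a ⊤ μ)
    (φ : ℝ → ℝ)
    (hconv : StrictConvexOn ℝ (Set.Ioi 0) φ) (hconv0 : ConvexOn ℝ (Set.Ici 0) φ)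
    (ψ : EuclideanSpace ℝ (Fin k) → ℝ) (ρmin : EuclideanSpace ℝ (Fin k) → X → ℝ)
    (hρP : ∀ b ∈ momentSet μ a, ρmin b ∈ probDens μ)
    (hρgen : ∀ b ∈ momentSet μ a, mom μ a (ρmin b) = b)
    (hρint : ∀ b ∈ momentSet μ a, Integrable (fun t => φ (ρmin b t)) μ)
    (hψ : ∀ b ∈ momentSet μ a, ψ b = ∫ t, φ (ρmin b t) ∂μ)
    (hmin : ∀ b ∈ momentSet μ a, ∀ ρ ∈ probDens μ, mom μ a ρ = b →
      Integrable (fun t => φ (ρ t)) μ → ψ b ≤ ∫ t, φ (ρ t) ∂μ)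
    (huniq : ∀ b ∈ momentSet μ a, ∀ ρ ∈ probDens μ, mom μ a ρ = b →
      Integrable (fun t => φ (ρ t)) μ → ψ b = ∫ t, φ (ρ t) ∂μ → ρ =ᵐ[μ] ρmin b)
    -- the optimal densities are bounded away from 0 and ∞
    (hbdd : ∀ b ∈ momentSet μ a, ∃ c C : ℝ, 0 < c ∧
      ∀ᵐ t ∂μ, c ≤ ρmin b t ∧ ρmin b t ≤ C)
    -- |b_ρ − b_σ| ≤ ‖a‖_∞ ‖ρ − σ‖_{L¹}
    (Ca : ℝ) (hCa : 0 ≤ Ca)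
    (hL1 : ∀ ρ σ : X → ℝ, Integrable ρ μ → Integrable σ μ →
      ‖mom μ a ρ - mom μ a σ‖ ≤ Ca * ∫ t, |ρ t - σ t| ∂μ)
    -- continuity of b ↦ ρ_b into L¹
    (hcont : ∀ b ∈ momentSet μ a, ∀ δ : ℝ, 0 < δ → ∃ η : ℝ, 0 < η ∧
      ∀ b' ∈ momentSet μ a, ‖b' - b‖ < η → ∫ t, |ρmin b' t - ρmin b t| ∂μ < δ)
    -- the constraint set A and the function f
    (A : Set (EuclideanSpace ℝ (Fin k))) (hAne : A.Nonempty)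
    (hAQ : A ⊆ momentSet μ a) (hAcl : closure A ∩ momentSet μ a ⊆ A)
    (f : EuclideanSpace ℝ (Fin k) → ℝ) (hf : ContinuousOn f A) :
    let SP : Set (X → ℝ) := {ρ | ρ ∈ probDens μ ∧
      Integrable (fun t => φ (ρ t)) μ ∧ mom μ a ρ ∈ A}
    let IP : (X → ℝ) → ℝ := fun ρ => (∫ t, φ (ρ t) ∂μ) + f (mom μ a ρ)
    let IQ : EuclideanSpace ℝ (Fin k) → ℝ := fun b => ψ b + f b
    ∀ ρstar ∈ SP,
      ((∃ ε : ℝ, 0 < ε ∧ ∀ σ ∈ SP,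
          (∫ t, |σ t - ρstar t| ∂μ) < ε → IP ρstar ≤ IP σ) ↔
        (∃ bstar ∈ A, (∃ ε : ℝ, 0 < ε ∧ ∀ b ∈ A, ‖b - bstar‖ < ε → IQ bstar ≤ IQ b) ∧
          ρstar =ᵐ[μ] ρmin bstar)) ∧
      ((∃ ε : ℝ, 0 < ε ∧ ∀ σ ∈ SP,
          (∫ t, |σ t - ρstar t| ∂μ) < ε → IP ρstar ≤ IP σ) →
        ∃ c C : ℝ, 0 < c ∧ ∀ᵐ t ∂μ, c ≤ ρstar t ∧ ρstar t ≤ C) :=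
  local_minimisers_equiv_general μ a ha φ hconv0 ψ ρmin hρP hρgen hρint hψ hmin huniq hbdd Ca hCa
    hL1 hcont A hAQ f
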